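/- arXiv:1310.2575 — 6 statements merged into one kernel-verified Lean document; each statement's English description precedes it below -/
import Mathlib

section
/- Let X ∈ ℝ^{n×n} be such that no eigenvalue of X (as a complex matrix) lies in (−∞, 0], and let A ∈ ℝ^{n×n} satisfy exp(A) = X with every eigenvalue z of A satisfying −π < Im(z) < π (i.e., A is the principal logarithm of X). Then for every B ∈ ℝ^{n×n} with B X = X B, one has B A = A B. -/
/-!
Complexify, and let `K` be the commutant of `X = exp A`; since `A` commutes with `X`, `ad A`
preserves `K`. If `v ∈ K` is an eigenvector of `ad A` with eigenvalue `μ`, then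
`exp A * v = e^μ • v * exp A` forces `e^μ = 1`, while `μ = ν' - ν` for eigenvalues `ν, ν'` of `A`;
as `exp` is injective on the spectrum of `A`, `μ = 0`. So `ad A` is nilpotent on `K`. Moreover, if
`⁅A, ⁅A, v⁆⁆ = 0` then `exp A * v = (v + ⁅A, v⁆) * exp A`, so for `v ∈ K` also `⁅A, v⁆ = 0`:
the kernel of `(ad A)²` on `K` lies in that of `ad A`, which for a nilpotent map means `ad A = 0`.
-/

open NormedSpace Polynomial
open scoped Nat

theorem pow_succ_mul_eq_of_commute_lie {R : Type*} [Ring R] {a m : R} (h : Commute a ⁅a, m⁆)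
    (p : ℕ) : a ^ (p + 1) * m = m * a ^ (p + 1) + (p + 1) • (⁅a, m⁆ * a ^ p) := by
  induction p with
  | zero => simp [Ring.lie_def]
  | succ p ih =>
    have ham : a * m = m * a + ⁅a, m⁆ := by rw [Ring.lie_def]; abel
    rw [pow_succ' a (p + 1), mul_assoc, ih, mul_add, mul_smul_comm, ← mul_assoc a m,
      ← mul_assoc a ⁅a, m⁆, h.eq, ham, add_mul, mul_assoc, mul_assoc, ← pow_succ', ← pow_succ',
      succ_nsmul' _ (p + 1), add_assoc]

theorem semiconjBy_add_algebraMap_of_lie_eq_smul {R A : Type*} [CommRing R] [Ring A]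
    [Algebra R A] {a b : A} {μ : R} (h : ⁅a, b⁆ = μ • b) :
    SemiconjBy b (a + algebraMap R A μ) a := by
  rw [SemiconjBy, mul_add, ← Algebra.commutes, ← Algebra.smul_def, ← h, Ring.lie_def]
  abel

theorem SemiconjBy.aeval {R A : Type*} [CommSemiring R] [Semiring A] [Algebra R A] {b x y : A}
    (h : SemiconjBy b x y) (p : R[X]) : SemiconjBy b (aeval x p) (aeval y p) := by
  simp only [SemiconjBy, aeval_eq_sum_range, Finset.mul_sum, Finset.sum_mul, mul_smul_comm,
    smul_mul_assoc, (h.pow_right _).eq]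

namespace NormedSpace

section RatAlgebra

variable {𝔸 : Type*} [NormedRing 𝔸] [NormedAlgebra ℚ 𝔸] [CompleteSpace 𝔸]

theorem exp_mul_eq_of_commute_lie {a m : 𝔸} (h : Commute a ⁅a, m⁆) :
    exp a * m = (m + ⁅a, m⁆) * exp a := by
  have hexp := exp_series_hasSum_exp' (𝕂 := ℚ) a
  have hshift : HasSum (fun p => ((p + 1)! : ℚ)⁻¹ • a ^ (p + 1)) (exp a - 1) := by
    simpa using (hasSum_nat_add_iff' 1).mpr hexp
  have hterm : (fun p => ((p + 1)! : ℚ)⁻¹ • a ^ (p + 1) * m) =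
      fun p => m * (((p + 1)! : ℚ)⁻¹ • a ^ (p + 1)) + ⁅a, m⁆ * ((p ! : ℚ)⁻¹ • a ^ p) := by
    funext p
    rw [smul_mul_assoc, pow_succ_mul_eq_of_commute_lie h, smul_add, mul_smul_comm, mul_smul_comm,
      ← Nat.cast_smul_eq_nsmul ℚ, smul_smul, Nat.factorial_succ, Nat.cast_mul, mul_inv]
    congr 2
    field_simp
  have hvalue : (m + ⁅a, m⁆) * exp a - ∑ i ∈ Finset.range 1, (i ! : ℚ)⁻¹ • a ^ i * m =
      m * (exp a - 1) + ⁅a, m⁆ * exp a := by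
    simp only [Finset.sum_range_one, Nat.factorial_zero, Nat.cast_one, inv_one, pow_zero, one_smul]
    noncomm_ring
  refine (hexp.mul_right m).unique ?_
  rw [← hasSum_nat_add_iff' 1, hterm, hvalue]
  exact (hshift.mul_left m).add (hexp.mul_left ⁅a, m⁆)

theorem lie_eq_zero_of_commute_exp {a m : 𝔸} (hm : Commute m (exp a))
    (h : ⁅a, ⁅a, m⁆⁆ = 0) : ⁅a, m⁆ = 0 := by
  have key := exp_mul_eq_of_commute_lie (commute_iff_lie_eq.mpr h)
  rw [hm.symm.eq, add_mul, left_eq_add] at key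
  exact (isUnit_exp a).mul_left_eq_zero.mp key

end RatAlgebra

theorem exp_mul_eq_of_lie_eq_smul {𝔸 : Type*} [NormedRing 𝔸] [NormedAlgebra ℂ 𝔸]
    [CompleteSpace 𝔸] {a b : 𝔸} {μ : ℂ} (h : ⁅a, b⁆ = μ • b) :
    exp a * b = Complex.exp μ • (b * exp a) := by
  let +nondep : NormedAlgebra ℚ 𝔸 := .restrictScalars ℚ ℂ 𝔸
  rw [← (semiconjBy_add_algebraMap_of_lie_eq_smul h).exp_right.eq,
    exp_add_of_commute (Algebra.commutes μ a).symm, ← algebraMap_exp_comm, Complex.exp_eq_exp_ℂ,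
    ← mul_assoc, ← Algebra.commutes, Algebra.smul_def]

end NormedSpace

namespace Module.End

theorem isNilpotent_of_forall_hasEigenvalue_eq_zero {K V : Type*} [Field K] [IsAlgClosed K]
    [AddCommGroup V] [Module K V] [FiniteDimensional K V] {f : Module.End K V}
    (h : ∀ μ, f.HasEigenvalue μ → μ = 0) : IsNilpotent f := by
  have htop : f.maxGenEigenspace 0 = ⊤ := by
    rw [eq_top_iff, ← iSup_maxGenEigenspace_eq_top]
    refine iSup_le fun μ => ?_
    rcases eq_or_ne μ 0 with rfl | hμ
    · exact le_rfl
    · refine le_of_eq_of_le (not_not.mp fun hne => hμ (h μ ?_)) bot_le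
      exact HasUnifEigenvalue.lt zero_lt_one hne
  refine ((LinearMap.charpoly_nilpotent_tfae f).out 0 2).mpr fun v => ?_
  simpa using (mem_maxGenEigenspace f 0 v).mp (htop ▸ Submodule.mem_top)

theorem eq_zero_of_isNilpotent_of_apply_apply_eq_zero {R M : Type*} [Semiring R]
    [AddCommMonoid M] [Module R M] {f : Module.End R M} (hf : IsNilpotent f)
    (h : ∀ v, f (f v) = 0 → f v = 0) : f = 0 := by
  obtain ⟨k, hk⟩ := hf
  suffices ∀ j, f ^ (j + 1) = 0 → f = 0 from this k (pow_eq_zero_of_le k.le_succ hk)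
  intro j
  induction j with
  | zero => simp
  | succ j ih =>
    refine fun hj => ih (LinearMap.ext fun v => ?_)
    rw [pow_succ', Module.End.mul_apply, LinearMap.zero_apply]
    refine h _ ?_
    rw [← Module.End.mul_apply, ← Module.End.mul_apply, ← pow_two, ← pow_add, add_comm, hj,
      LinearMap.zero_apply]

end Module.End

namespace Matrix

open LieAlgebra

attribute [local instance] LieRing.ofAssociativeRing

variable {ι : Type*} [Fintype ι] [DecidableEq ι]

/-- By Cayley–Hamilton, `B * χ_A(A + μ) = χ_A(A) * B = 0`, so `χ_A(A + μ)` is singular and, by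
spectral mapping, `χ_A` has a root in `σ (A + μ) = σ A + μ`. -/
theorem exists_mem_spectrum_add_mem_spectrum_of_lie_eq_smul {𝕜 : Type*} [Field 𝕜]
    [IsAlgClosed 𝕜] {A B : Matrix ι ι 𝕜} {μ : 𝕜} (hB : B ≠ 0) (h : ⁅A, B⁆ = μ • B) :
    ∃ ν ∈ spectrum 𝕜 A, ν + μ ∈ spectrum 𝕜 A := by
  have : Nonempty ι := by
    by_contra hι
    exact hB (Matrix.ext fun i => (hι ⟨i⟩).elim)
  have hB0 : B * aeval (A + algebraMap 𝕜 _ μ) A.charpoly = 0 := by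
    rw [((semiconjBy_add_algebraMap_of_lie_eq_smul h).aeval _).eq, aeval_self_charpoly, zero_mul]
  have hzero : (0 : 𝕜) ∈ spectrum 𝕜 (aeval (A + algebraMap 𝕜 _ μ) A.charpoly) := by
    rw [spectrum.zero_mem_iff]
    exact fun hunit => hB (hunit.mul_left_eq_zero.mp hB0)
  rw [spectrum.map_polynomial_aeval_of_degree_pos _ _
      (by simp [charpoly_degree_eq_dim, Fintype.card_pos]),
    ← spectrum.add_singleton_eq, Set.add_singleton, Set.image_image] at hzero
  obtain ⟨ν, hν, hroot⟩ := hzero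
  exact ⟨ν, hν, mem_spectrum_iff_isRoot_charpoly.mpr hroot⟩

theorem exp_map_ofReal (A : Matrix ι ι ℝ) :
    exp (A.map Complex.ofReal) = (exp A).map Complex.ofReal := by
  open scoped Norms.Operator in
  exact (map_exp Complex.ofRealHom.mapMatrix
    (continuous_id.matrix_map Complex.continuous_ofReal) A).symm

theorem eq_zero_of_lie_eq_smul_of_commute_exp {A v : Matrix ι ι ℂ} {μ : ℂ}
    (hA : Set.InjOn Complex.exp (spectrum ℂ A)) (hv : v ≠ 0) (hvA : Commute v (exp A))
    (h : ⁅A, v⁆ = μ • v) : μ = 0 := by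
  obtain ⟨ν, hν, hνμ⟩ := exists_mem_spectrum_add_mem_spectrum_of_lie_eq_smul hv h
  have hexpμ : Complex.exp μ = 1 := by
    have key : exp A * v = Complex.exp μ • (v * exp A) :=
      open scoped Norms.Operator in exp_mul_eq_of_lie_eq_smul (𝔸 := Matrix ι ι ℂ) h
    rw [hvA.eq] at key
    have hzero : (Complex.exp μ - 1) • (exp A * v) = 0 := by
      rw [sub_smul, one_smul, ← key, sub_self]
    exact sub_eq_zero.mp ((smul_eq_zero.mp hzero).resolve_right
      ((isUnit_exp A).mul_right_eq_zero.not.mpr hv))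
  have := hA hνμ hν (by rw [Complex.exp_add, hexpμ, mul_one])
  linear_combination this

theorem commute_of_commute_exp {A B : Matrix ι ι ℂ} (hA : Set.InjOn Complex.exp (spectrum ℂ A))
    (hB : Commute B (exp A)) : Commute B A := by
  let K : Submodule ℂ (Matrix ι ι ℂ) := LinearMap.ker (ad ℂ (Matrix ι ι ℂ) (exp A))
  have hK : ∀ v ∈ K, ad ℂ (Matrix ι ι ℂ) A v ∈ K := fun v hv => by
    simp only [K, LinearMap.mem_ker, ad_apply] at hv ⊢
    rw [leibniz_lie, ((Commute.refl A).exp_left).lie_eq, hv, zero_lie, lie_zero, add_zero]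
  let L := (ad ℂ (Matrix ι ι ℂ) A).restrict hK
  have hL : L = 0 := by
    refine Module.End.eq_zero_of_isNilpotent_of_apply_apply_eq_zero
      (Module.End.isNilpotent_of_forall_hasEigenvalue_eq_zero fun μ hμ => ?_) fun v hv => ?_
    · obtain ⟨v, hv⟩ := hμ.exists_hasEigenvector
      exact eq_zero_of_lie_eq_smul_of_commute_exp hA (by simpa using hv.2)
        (commute_iff_lie_eq.mpr v.2).symm (congrArg Subtype.val hv.apply_eq_smul)
    · exact Subtype.ext (open scoped Norms.Operator in lie_eq_zero_of_commute_exp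
        (𝔸 := Matrix ι ι ℂ) (commute_iff_lie_eq.mpr v.2).symm (congrArg Subtype.val hv))
  have hBK : B ∈ K := commute_iff_lie_eq.mp hB.symm
  exact (commute_iff_lie_eq.mpr (congrArg Subtype.val (LinearMap.congr_fun hL ⟨B, hBK⟩))).symm

end Matrix

theorem principal_log_commutes_general {n : ℕ} (X A : Matrix (Fin n) (Fin n) ℝ)
    (hexp : NormedSpace.exp A = X)
    (hstrip : ∀ z ∈ spectrum ℂ (A.map (Complex.ofReal)), -Real.pi < z.im ∧ z.im < Real.pi)
    (B : Matrix (Fin n) (Fin n) ℝ) (hB : B * X = X * B) :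
    B * A = A * B := by
  have hinj : Set.InjOn Complex.exp (spectrum ℂ (A.map Complex.ofReal)) := fun x hx y hy hxy =>
    Complex.exp_inj_of_neg_pi_lt_of_le_pi (hstrip x hx).1 (hstrip x hx).2.le (hstrip y hy).1
      (hstrip y hy).2.le hxy
  have hBexp : Commute (B.map Complex.ofReal) (NormedSpace.exp (A.map Complex.ofReal)) := by
    rw [Matrix.exp_map_ofReal, hexp]
    exact Commute.map hB Complex.ofRealHom.mapMatrix
  exact Commute.of_map (f := Complex.ofRealHom.mapMatrix)
    (Matrix.map_injective Complex.ofReal_injective) (Matrix.commute_of_commute_exp hinj hBexp)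

/-- If `A` is the principal logarithm of a real matrix `X` having no complex eigenvalue in
`(−∞, 0]`, then `log X = A` commutes with every matrix that commutes with `X`. -/
theorem principal_log_commutes {n : ℕ} (X A : Matrix (Fin n) (Fin n) ℝ)
    (hX : ∀ z ∈ spectrum ℂ (X.map (Complex.ofReal)), ¬ (z.im = 0 ∧ z.re ≤ 0))
    (hexp : NormedSpace.exp A = X)
    (hstrip : ∀ z ∈ spectrum ℂ (A.map (Complex.ofReal)), -Real.pi < z.im ∧ z.im < Real.pi)
    (B : Matrix (Fin n) (Fin n) ℝ) (hB : B * X = X * B) :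
    B * A = A * B :=
  principal_log_commutes_general X A hexp hstrip B hB
end

section
/- Let X, X̂ : [0,∞) → ℝ^{n×n} with X(t) invertible for all t, and suppose there are constants K₁, K₂ > 0 with ‖X(t)‖ ≤ K₁ and ‖X(t)⁻¹‖ ≤ K₂ for all t ≥ 0. Define the right-invariant error E_r(t) = X̂(t) X(t)⁻¹. If there exist m, α > 0 such that ‖E_r(t) − Iₙ‖ ≤ m e^{−α t} ‖E_r(0) − Iₙ‖ for all t ≥ 0, then ‖X̂(t) − X(t)‖ ≤ K₁ K₂ m e^{−α t} ‖X̂(0) − X(0)‖ for all t ≥ 0. -/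
open scoped Matrix.Norms.L2Operator

section RightInvariantError

variable {A : Type*} [SeminormedRing A] {x u v : A}

theorem norm_sub_le_norm_mul_sub_one_mul (hvu : v * u = 1) : ‖x - u‖ ≤ ‖x * v - 1‖ * ‖u‖ := by
  calc ‖x - u‖ = ‖(x * v - 1) * u‖ := by rw [sub_mul, mul_assoc, hvu, mul_one, one_mul]
    _ ≤ ‖x * v - 1‖ * ‖u‖ := norm_mul_le _ _

theorem norm_mul_sub_one_le_norm_sub_mul (huv : u * v = 1) : ‖x * v - 1‖ ≤ ‖x - u‖ * ‖v‖ := by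
  calc ‖x * v - 1‖ = ‖(x - u) * v‖ := by rw [sub_mul, huv]
    _ ≤ ‖x - u‖ * ‖v‖ := norm_mul_le _ _

end RightInvariantError

theorem error_norm_convergence_general {n : ℕ} (X Xhat : ℝ → Matrix (Fin n) (Fin n) ℝ)
    (hinv : ∀ t : ℝ, IsUnit (X t))
    (K₁ K₂ : ℝ) (hK₁ : 0 < K₁)
    (hXb : ∀ t : ℝ, 0 ≤ t → ‖X t‖ ≤ K₁)
    (hXinvb : ∀ t : ℝ, 0 ≤ t → ‖(X t)⁻¹‖ ≤ K₂)
    (m α : ℝ) (hm : 0 < m)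
    (hEr : ∀ t : ℝ, 0 ≤ t →
      ‖Xhat t * (X t)⁻¹ - 1‖ ≤ m * Real.exp (-α * t) * ‖Xhat 0 * (X 0)⁻¹ - 1‖) :
    ∀ t : ℝ, 0 ≤ t →
      ‖Xhat t - X t‖ ≤ K₁ * K₂ * m * Real.exp (-α * t) * ‖Xhat 0 - X 0‖ := by
  intro t ht
  have hdet : ∀ s, IsUnit (X s).det := fun s => (Matrix.isUnit_iff_isUnit_det _).mp (hinv s)
  have hE₀ : ‖Xhat 0 * (X 0)⁻¹ - 1‖ ≤ ‖Xhat 0 - X 0‖ * K₂ :=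
    (norm_mul_sub_one_le_norm_sub_mul (Matrix.mul_nonsing_inv _ (hdet 0))).trans
      (mul_le_mul_of_nonneg_left (hXinvb 0 le_rfl) (norm_nonneg _))
  calc ‖Xhat t - X t‖ ≤ ‖Xhat t * (X t)⁻¹ - 1‖ * ‖X t‖ :=
        norm_sub_le_norm_mul_sub_one_mul (Matrix.nonsing_inv_mul _ (hdet t))
    _ ≤ m * Real.exp (-α * t) * ‖Xhat 0 * (X 0)⁻¹ - 1‖ * K₁ :=
        mul_le_mul (hEr t ht) (hXb t ht) (norm_nonneg _) ((norm_nonneg _).trans (hEr t ht))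
    _ ≤ m * Real.exp (-α * t) * (‖Xhat 0 - X 0‖ * K₂) * K₁ := by gcongr
    _ = K₁ * K₂ * m * Real.exp (-α * t) * ‖Xhat 0 - X 0‖ := by ring

/-- If `‖X(t)‖ ≤ K₁`, `‖X(t)⁻¹‖ ≤ K₂` and the right-invariant error
`E_r(t) = X̂(t) X(t)⁻¹` converges exponentially to `Iₙ`, then `X̂(t) → X(t)` exponentially:
`‖X̂(t) − X(t)‖ ≤ K₁ K₂ m e^{−α t} ‖X̂(0) − X(0)‖` for all `t ≥ 0`. -/
theorem error_norm_convergence {n : ℕ} (X Xhat : ℝ → Matrix (Fin n) (Fin n) ℝ)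
    (hinv : ∀ t : ℝ, IsUnit (X t))
    (K₁ K₂ : ℝ) (hK₁ : 0 < K₁) (hK₂ : 0 < K₂)
    (hXb : ∀ t : ℝ, 0 ≤ t → ‖X t‖ ≤ K₁)
    (hXinvb : ∀ t : ℝ, 0 ≤ t → ‖(X t)⁻¹‖ ≤ K₂)
    (m α : ℝ) (hm : 0 < m) (hα : 0 < α)
    (hEr : ∀ t : ℝ, 0 ≤ t →
      ‖Xhat t * (X t)⁻¹ - 1‖ ≤ m * Real.exp (-α * t) * ‖Xhat 0 * (X 0)⁻¹ - 1‖) :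
    ∀ t : ℝ, 0 ≤ t →
      ‖Xhat t - X t‖ ≤ K₁ * K₂ * m * Real.exp (-α * t) * ‖Xhat 0 - X 0‖ :=
  error_norm_convergence_general X Xhat hinv K₁ K₂ hK₁ hXb hXinvb m α hm hEr
end

section
/- Let 0 < r < 1 and let E : ℝ → ℝ^{n×n} be differentiable with ‖E(s) − Iₙ‖ ≤ r for all s, and suppose that for every s the derivative Ė(s) commutes with E(s). Then the curve e(s) = log(E(s)) is differentiable and for every t, ė(t) = E(t)⁻¹ Ė(t). -/
open scoped Matrix.Norms.L2Operator

/-- The principal matrix logarithm, defined by the convergent series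
`log X = ∑_{k=1}^∞ ((−1)^{k+1}/k) (X − I)^k` (here re-indexed over `k : ℕ`). -/
noncomputable def mlog {n : ℕ} (X : Matrix (Fin n) (Fin n) ℝ) : Matrix (Fin n) (Fin n) ℝ :=
  ∑' k : ℕ, (((-1 : ℝ) ^ k / (k + 1)) • (X - 1) ^ (k + 1))

/-!
The logarithm series `∑ cₖ (x - 1)^(k+1)`, `cₖ = (-1)^k / (k + 1)`, makes sense in any Banach
algebra and can be differentiated termwise on every ball `‖x - 1‖ < ρ < 1`: the (noncommutative)
derivative of the `k`-th term is a sum of `k + 1` maps `h ↦ (x - 1)^(k-i) h (x - 1)^i`, so it has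
norm at most `ρ^k`. In a direction `h` commuting with `x` the `k`-th derivative term collapses
to `(1 - x)^k h`, and the geometric series sums to `x⁻¹ h`. The chain rule then gives the
derivative of `log ∘ E`.
-/

open scoped RightActions

theorem norm_pow_mul_mul_pow_le {R : Type*} [SeminormedRing R] (y h : R) (i j : ℕ) :
    ‖y ^ i * h * y ^ j‖ ≤ ‖y‖ ^ (i + j) * ‖h‖ := by
  have left (g : R) (i : ℕ) : ‖y ^ i * g‖ ≤ ‖y‖ ^ i * ‖g‖ := by
    induction i with
    | zero => simp
    | succ i ih => calc
        ‖y ^ (i + 1) * g‖ = ‖y * (y ^ i * g)‖ := by rw [pow_succ', mul_assoc]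
        _ ≤ ‖y‖ * (‖y‖ ^ i * ‖g‖) := norm_mul_le_of_le le_rfl ih
        _ = ‖y‖ ^ (i + 1) * ‖g‖ := by ring
  have right (g : R) (j : ℕ) : ‖g * y ^ j‖ ≤ ‖g‖ * ‖y‖ ^ j := by
    induction j with
    | zero => simp
    | succ j ih => calc
        ‖g * y ^ (j + 1)‖ = ‖g * y ^ j * y‖ := by rw [pow_succ, mul_assoc]
        _ ≤ ‖g‖ * ‖y‖ ^ j * ‖y‖ := norm_mul_le_of_le ih le_rfl
        _ = ‖g‖ * ‖y‖ ^ (j + 1) := by ring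
  calc ‖y ^ i * h * y ^ j‖ ≤ ‖y ^ i * h‖ * ‖y‖ ^ j := right _ j
    _ ≤ ‖y‖ ^ i * ‖h‖ * ‖y‖ ^ j := by gcongr; exact left h i
    _ = ‖y‖ ^ (i + j) * ‖h‖ := by ring

section LogSeries

variable {𝔸 : Type*} [NormedRing 𝔸] [NormedAlgebra ℝ 𝔸]

noncomputable def logSeriesTerm (k : ℕ) (x : 𝔸) : 𝔸 :=
  ((-1 : ℝ) ^ k / (k + 1)) • (x - 1) ^ (k + 1)

noncomputable def logSeries (x : 𝔸) : 𝔸 :=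
  ∑' k, logSeriesTerm k x

noncomputable def logSeriesTermFDeriv (k : ℕ) (x : 𝔸) : 𝔸 →L[ℝ] 𝔸 :=
  ((-1 : ℝ) ^ k / (k + 1)) •
    ∑ i ∈ Finset.range (k + 1), (x - 1) ^ (k - i) •> ContinuousLinearMap.id ℝ 𝔸 <• (x - 1) ^ i

theorem hasFDerivAt_logSeriesTerm (k : ℕ) (x : 𝔸) :
    HasFDerivAt (logSeriesTerm k) (logSeriesTermFDeriv k x) x :=
  (((hasFDerivAt_id x).sub_const 1).fun_pow' (k + 1)).const_smul ((-1 : ℝ) ^ k / (k + 1))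

theorem logSeriesTermFDeriv_apply (k : ℕ) (x h : 𝔸) :
    logSeriesTermFDeriv k x h = ((-1 : ℝ) ^ k / (k + 1)) •
      ∑ i ∈ Finset.range (k + 1), (x - 1) ^ (k - i) * h * (x - 1) ^ i := by
  simp [logSeriesTermFDeriv]

theorem norm_logSeriesTermFDeriv_le (k : ℕ) (x : 𝔸) :
    ‖logSeriesTermFDeriv k x‖ ≤ ‖x - 1‖ ^ k := by
  refine ContinuousLinearMap.opNorm_le_bound _ (by positivity) fun h => ?_
  have hterm : ∀ i ∈ Finset.range (k + 1),
      ‖(x - 1) ^ (k - i) * h * (x - 1) ^ i‖ ≤ ‖x - 1‖ ^ k * ‖h‖ := by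
    intro i hi
    have := norm_pow_mul_mul_pow_le (x - 1) h (k - i) i
    rwa [Nat.sub_add_cancel (Finset.mem_range_succ_iff.mp hi)] at this
  have hc : ‖((-1 : ℝ) ^ k / (k + 1))‖ = 1 / (k + 1) := by
    rw [norm_div, norm_pow, norm_neg, norm_one, one_pow, Real.norm_of_nonneg (by positivity)]
  calc ‖logSeriesTermFDeriv k x h‖
      ≤ 1 / (k + 1) * ∑ i ∈ Finset.range (k + 1), ‖(x - 1) ^ (k - i) * h * (x - 1) ^ i‖ := by
        rw [logSeriesTermFDeriv_apply, norm_smul, hc]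
        gcongr
        exact norm_sum_le _ _
    _ ≤ 1 / (k + 1) * ((k + 1) * (‖x - 1‖ ^ k * ‖h‖)) := by
        gcongr
        simpa using Finset.sum_le_sum hterm
    _ = ‖x - 1‖ ^ k * ‖h‖ := by field_simp

theorem logSeriesTermFDeriv_apply_of_commute {x h : 𝔸} (hc : Commute x h) (k : ℕ) :
    logSeriesTermFDeriv k x h = (1 - x) ^ k * h := by
  have hterm : ∀ i ∈ Finset.range (k + 1),
      (x - 1) ^ (k - i) * h * (x - 1) ^ i = (x - 1) ^ k * h := by
    intro i hi
    rw [mul_assoc, ((hc.sub_left (Commute.one_left h)).pow_left i).eq.symm, ← mul_assoc, ← pow_add,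
      Nat.sub_add_cancel (Finset.mem_range_succ_iff.mp hi)]
  rw [logSeriesTermFDeriv_apply, Finset.sum_congr rfl hterm, Finset.sum_const, Finset.card_range,
    ← Nat.cast_smul_eq_nsmul ℝ, smul_smul, Nat.cast_add_one, div_mul_cancel₀ _ (by positivity),
    ← smul_mul_assoc, ← smul_pow, neg_one_smul, neg_sub]

variable [CompleteSpace 𝔸]

theorem hasFDerivAt_logSeries {x : 𝔸} (hx : ‖x - 1‖ < 1) :
    HasFDerivAt logSeries (∑' k, logSeriesTermFDeriv k x) x := by
  obtain ⟨ρ, hxρ, hρ⟩ := exists_between hx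
  have hmem : ∀ {y : 𝔸}, y ∈ Metric.ball 1 ρ ↔ ‖y - 1‖ < ρ := mem_ball_iff_norm
  refine hasFDerivAt_tsum_of_isPreconnected (u := fun k => ρ ^ k)
    (summable_geometric_of_lt_one ((norm_nonneg _).trans hxρ.le) hρ) Metric.isOpen_ball
    (convex_ball 1 ρ).isPreconnected (fun k y _ => hasFDerivAt_logSeriesTerm k y)
    (fun k y hy => (norm_logSeriesTermFDeriv_le k y).trans
      (pow_le_pow_left₀ (norm_nonneg _) (hmem.mp hy).le k))
    (Metric.mem_ball_self ((norm_nonneg _).trans_lt hxρ)) ?_ (hmem.mpr hxρ)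
  simp [logSeriesTerm]

theorem tsum_logSeriesTermFDeriv_apply_of_commute {x h : 𝔸} (hx : ‖x - 1‖ < 1)
    (hc : Commute x h) : (∑' k, logSeriesTermFDeriv k x) h = Ring.inverse x * h := by
  have hsum : Summable fun k => logSeriesTermFDeriv k x :=
    .of_norm_bounded (summable_geometric_of_lt_one (norm_nonneg _) hx)
      (norm_logSeriesTermFDeriv_le · x)
  have happly := hsum.hasSum.mapL (ContinuousLinearMap.apply ℝ 𝔸 h)
  simp only [ContinuousLinearMap.apply_apply, logSeriesTermFDeriv_apply_of_commute hc] at happly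
  have hgeom := (hasSum_geom_series_inverse (1 - x) (by rwa [norm_sub_rev])).mul_right h
  rw [sub_sub_cancel] at hgeom
  exact happly.unique hgeom

theorem HasDerivAt.logSeries_of_commute {f : ℝ → 𝔸} {f' : 𝔸} {t : ℝ} (hf : HasDerivAt f f' t)
    (hx : ‖f t - 1‖ < 1) (hc : Commute (f t) f') :
    HasDerivAt (fun s => logSeries (f s)) (Ring.inverse (f t) * f') t := by
  rw [← tsum_logSeriesTermFDeriv_apply_of_commute hx hc]
  exact (hasFDerivAt_logSeries hx).comp_hasDerivAt t hf

end LogSeries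

theorem deriv_mlog_of_commute_general {n : ℕ} (r : ℝ) (hr1 : r < 1)
    (E E' : ℝ → Matrix (Fin n) (Fin n) ℝ)
    (hd : ∀ s : ℝ, HasDerivAt E (E' s) s)
    (hb : ∀ s : ℝ, ‖E s - 1‖ ≤ r)
    (hc : ∀ s : ℝ, E s * E' s = E' s * E s) :
    ∀ t : ℝ, HasDerivAt (fun s => mlog (E s)) ((E t)⁻¹ * E' t) t := by
  intro t
  rw [Matrix.nonsing_inv_eq_ringInverse]
  -- `mlog` unfolds to `logSeries` in the algebra of matrices with the L2 operator norm
  exact (hd t).logSeries_of_commute ((hb t).trans_lt hr1) (hc t)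

/-- If `E` is differentiable with `‖E(s) − Iₙ‖ ≤ r < 1` and `Ė(s)` commutes with `E(s)` for
all `s`, then `e(s) = log (E s)` is differentiable with `ė(t) = E(t)⁻¹ Ė(t)`. -/
theorem deriv_mlog_of_commute {n : ℕ} (r : ℝ) (hr0 : 0 < r) (hr1 : r < 1)
    (E E' : ℝ → Matrix (Fin n) (Fin n) ℝ)
    (hd : ∀ s : ℝ, HasDerivAt E (E' s) s)
    (hb : ∀ s : ℝ, ‖E s - 1‖ ≤ r)
    (hc : ∀ s : ℝ, E s * E' s = E' s * E s) :
    ∀ t : ℝ, HasDerivAt (fun s => mlog (E s)) ((E t)⁻¹ * E' t) t :=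
  deriv_mlog_of_commute_general r hr1 E E' hd hb hc
end

section
/- Let a₀ ∈ ℝ, let 0 < r < 1, and let E : ℝ → ℝ^{n×n} be differentiable with ‖E(s) − Iₙ‖ ≤ r for all s and satisfying the differential equation Ė(s) = −a₀ E(s) log(E(s)) for all s. Then the curve e(s) = log(E(s)) is differentiable and satisfies the linear differential equation ė(s) = −a₀ e(s) for all s. -/
open scoped Matrix.Norms.L2Operator

section LogOneAdd

variable {A : Type*} [NormedRing A]

theorem norm_pow_mul_le (x y : A) (k : ℕ) : ‖x ^ k * y‖ ≤ ‖x‖ ^ k * ‖y‖ := by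
  induction k with
  | zero => simp
  | succ k ih =>
    calc ‖x ^ (k + 1) * y‖ = ‖x * (x ^ k * y)‖ := by rw [pow_succ', mul_assoc]
      _ ≤ ‖x‖ * (‖x‖ ^ k * ‖y‖) := norm_mul_le_of_le le_rfl ih
      _ = ‖x‖ ^ (k + 1) * ‖y‖ := by ring

theorem HasDerivAt.pow_succ_of_commute {𝕜 : Type*} [NontriviallyNormedField 𝕜]
    [NormedAlgebra 𝕜 A] {F : 𝕜 → A} {F' : A} {s : 𝕜} (hF : HasDerivAt F F' s)
    (hc : Commute (F s) F') (k : ℕ) :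
    HasDerivAt (fun τ => F τ ^ (k + 1)) ((k + 1) • (F s ^ k * F')) s := by
  induction k with
  | zero => simpa using hF
  | succ k ih =>
    convert ih.mul hF using 1
    · ext τ; exact pow_succ _ _
    · rw [smul_mul_assoc, mul_assoc, ← hc.eq, ← mul_assoc, ← pow_succ, succ_nsmul]

variable [NormedAlgebra ℝ A]

noncomputable def logOneAdd (x : A) : A :=
  ∑' k : ℕ, (((-1 : ℝ) ^ k / (k + 1)) • x ^ (k + 1))

theorem mlog_eq_logOneAdd {n : ℕ} (X : Matrix (Fin n) (Fin n) ℝ) :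
    mlog X = logOneAdd (X - 1) := rfl

theorem norm_logOneAdd_term_le (x : A) (k : ℕ) :
    ‖((-1 : ℝ) ^ k / (k + 1)) • x ^ (k + 1)‖ ≤ ‖x‖ * ‖x‖ ^ k := by
  have hcoeff : ‖(-1 : ℝ) ^ k / (k + 1)‖ ≤ 1 := by
    rw [norm_div, norm_pow, norm_neg, norm_one, one_pow, Real.norm_of_nonneg (by positivity)]
    exact div_le_one_of_le₀ (by linarith [k.cast_nonneg (α := ℝ)]) (by positivity)
  calc ‖((-1 : ℝ) ^ k / (k + 1)) • x ^ (k + 1)‖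
      ≤ 1 * ‖x‖ ^ (k + 1) := by
        rw [norm_smul]
        exact mul_le_mul hcoeff (norm_pow_le' x k.succ_pos) (norm_nonneg _) zero_le_one
    _ = ‖x‖ * ‖x‖ ^ k := by ring

theorem hasDerivAt_logOneAdd_term {F : ℝ → A} {F' : A} {s : ℝ} (hF : HasDerivAt F F' s)
    (hc : Commute (F s) F') (k : ℕ) :
    HasDerivAt (fun τ => ((-1 : ℝ) ^ k / (k + 1)) • F τ ^ (k + 1)) ((-F s) ^ k * F') s := by
  refine ((hF.pow_succ_of_commute hc k).const_smul ((-1 : ℝ) ^ k / (k + 1))).congr_deriv ?_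
  rw [← Nat.cast_smul_eq_nsmul ℝ, smul_smul, ← neg_one_smul ℝ (F s), smul_pow, smul_mul_assoc]
  congr 1
  push_cast
  field_simp

theorem commute_logOneAdd (x : A) : Commute x (logOneAdd x) :=
  Commute.tsum_right _ fun k => ((Commute.refl x).pow_right (k + 1)).smul_right _

theorem norm_logOneAdd_le {x : A} {r : ℝ} (hx : ‖x‖ ≤ r) (hr : r < 1) :
    ‖logOneAdd x‖ ≤ r / (1 - r) := by
  have hr0 : 0 ≤ r := (norm_nonneg x).trans hx
  calc ‖logOneAdd x‖ ≤ r * (1 - r)⁻¹ :=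
        tsum_of_norm_bounded ((hasSum_geometric_of_lt_one hr0 hr).mul_left r) fun k =>
          (norm_logOneAdd_term_le x k).trans (by gcongr)
    _ = r / (1 - r) := (div_eq_mul_inv r (1 - r)).symm

variable [CompleteSpace A]

theorem summable_logOneAdd {x : A} (hx : ‖x‖ < 1) :
    Summable fun k : ℕ => ((-1 : ℝ) ^ k / (k + 1)) • x ^ (k + 1) :=
  .of_norm_bounded ((summable_geometric_of_lt_one (norm_nonneg x) hx).mul_left ‖x‖)
    (norm_logOneAdd_term_le x)

theorem hasDerivAt_logOneAdd_comp {F F' : ℝ → A} {r C : ℝ} (hr : r < 1) (hF : ∀ τ, ‖F τ‖ ≤ r)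
    (hF' : ∀ τ, HasDerivAt F (F' τ) τ) (hC : ∀ τ, ‖F' τ‖ ≤ C)
    (hcomm : ∀ τ, Commute (F τ) (F' τ)) (s : ℝ) :
    HasDerivAt (fun τ => logOneAdd (F τ)) (Ring.inverse (1 + F s) * F' s) s := by
  have hr0 : 0 ≤ r := (norm_nonneg _).trans (hF s)
  have hbound : ∀ k τ, ‖(-F τ) ^ k * F' τ‖ ≤ r ^ k * C := fun k τ =>
    (norm_pow_mul_le _ _ k).trans <| mul_le_mul
      (pow_le_pow_left₀ (norm_nonneg _) ((norm_neg _).trans_le (hF τ)) k) (hC τ)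
      (norm_nonneg _) (pow_nonneg hr0 _)
  have hderiv := hasDerivAt_tsum ((summable_geometric_of_lt_one hr0 hr).mul_right C)
    (fun k τ => hasDerivAt_logOneAdd_term (hF' τ) (hcomm τ) k) hbound
    (summable_logOneAdd ((hF s).trans_lt hr)) s
  have hgeom : ‖-F s‖ < 1 := by rw [norm_neg]; exact (hF s).trans_lt hr
  rwa [(summable_geometric_of_norm_lt_one hgeom).tsum_mul_right, geom_series_eq_inverse _ hgeom,
    sub_neg_eq_add] at hderiv

end LogOneAdd

theorem mlog_linearizes_ode_general {n : ℕ} (a₀ : ℝ) (r : ℝ) (hr1 : r < 1)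
    (E : ℝ → Matrix (Fin n) (Fin n) ℝ)
    (hb : ∀ s : ℝ, ‖E s - 1‖ ≤ r)
    (hode : ∀ s : ℝ, HasDerivAt E (-(a₀ • (E s * mlog (E s)))) s) :
    ∀ s : ℝ, HasDerivAt (fun τ => mlog (E τ)) (-(a₀ • mlog (E s))) s := by
  simp only [mlog_eq_logOneAdd] at hode ⊢
  have hcomm : ∀ τ, Commute (E τ - 1) (-(a₀ • (E τ * logOneAdd (E τ - 1)))) := fun τ =>
    ((((Commute.refl _).sub_left (Commute.one_left _)).mul_right
      (commute_logOneAdd _)).smul_right a₀).neg_right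
  have hbound : ∀ τ, ‖-(a₀ • (E τ * logOneAdd (E τ - 1)))‖ ≤
      |a₀| * ((‖(1 : Matrix (Fin n) (Fin n) ℝ)‖ + r) * (r / (1 - r))) := by
    intro τ
    rw [norm_neg, norm_smul, Real.norm_eq_abs]
    refine mul_le_mul_of_nonneg_left (norm_mul_le_of_le ?_ (norm_logOneAdd_le (hb τ) hr1))
      (abs_nonneg a₀)
    calc ‖E τ‖ = ‖1 + (E τ - 1)‖ := by rw [add_sub_cancel]
      _ ≤ ‖1‖ + r := norm_add_le_of_le le_rfl (hb τ)
  intro s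
  have hderiv := hasDerivAt_logOneAdd_comp hr1 hb (fun τ => (hode τ).sub_const 1) hbound hcomm s
  have hunit : IsUnit (E s) := by
    simpa using isUnit_one_sub_of_norm_lt_one
      (((norm_sub_rev 1 (E s)).trans_le (hb s)).trans_lt hr1)
  rwa [add_sub_cancel, mul_neg, mul_smul_comm, Ring.inverse_mul_cancel_left _ _ hunit] at hderiv

/-- If `E` satisfies `Ė = −a₀ E log E` while staying in the ball `‖E − Iₙ‖ ≤ r < 1`, then
`e = log E` satisfies the linear equation `ė = −a₀ e`. -/
theorem mlog_linearizes_ode {n : ℕ} (a₀ : ℝ) (r : ℝ) (hr0 : 0 < r) (hr1 : r < 1)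
    (E : ℝ → Matrix (Fin n) (Fin n) ℝ)
    (hb : ∀ s : ℝ, ‖E s - 1‖ ≤ r)
    (hode : ∀ s : ℝ, HasDerivAt E (-(a₀ • (E s * mlog (E s)))) s) :
    ∀ s : ℝ, HasDerivAt (fun τ => mlog (E τ)) (-(a₀ • mlog (E s))) s :=
  mlog_linearizes_ode_general a₀ r hr1 E hb hode
end

section
/- Let a₀ ∈ ℝ, let u : ℝ → ℝ^{n×n}, and let X, X̂ : ℝ → ℝ^{n×n} be differentiable with X(t) invertible for all t. Suppose that at time t: Ẋ(t) = X(t) u(t); X̂ satisfies the passive observer equation Ẋ̂(t) = X̂(t) u(t) − a₀ X̂(t) log(X(t)⁻¹ X̂(t)); and both ‖X(t)⁻¹ X̂(t) − Iₙ‖ < 1 and ‖X̂(t) X(t)⁻¹ − Iₙ‖ < 1. Then the right-invariant error E_r(s) = X̂(s) X(s)⁻¹ is differentiable at t with Ė_r(t) = −a₀ E_r(t) log(E_r(t)). -/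
open scoped Matrix.Norms.L2Operator

/-!
The right-invariant error `E = X̂ X⁻¹` satisfies `Ė = X̂' X⁻¹ - X̂ X⁻¹ X' X⁻¹`. Substituting the
two dynamics, the input terms `X̂ u X⁻¹` cancel and what remains is `-a₀ X̂ log(X⁻¹ X̂) X⁻¹`.
Every term of the logarithm series intertwines: `X̂ (X⁻¹ X̂ - 1)ᵏ = (X̂ X⁻¹ - 1)ᵏ X̂`, so
`X̂ log(X⁻¹ X̂) = log(X̂ X⁻¹) X̂` and the derivative is `-a₀ log(E) E = -a₀ E log(E)`.
-/

theorem summable_log_series_of_norm_lt_one {R : Type*} [NormedRing R] [NormedAlgebra ℝ R]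
    [CompleteSpace R] {x : R} (hx : ‖x‖ < 1) :
    Summable (fun k : ℕ => ((-1 : ℝ) ^ k / (k + 1)) • x ^ (k + 1)) := by
  refine Summable.of_norm_bounded (summable_geometric_of_lt_one (norm_nonneg x) hx) fun k => ?_
  have hcoeff : ‖(-1 : ℝ) ^ k / (k + 1)‖ ≤ 1 := by
    rw [norm_div, norm_pow, norm_neg, norm_one, one_pow, Real.norm_of_nonneg (by positivity)]
    exact div_le_one_of_le₀ (by linarith [k.cast_nonneg (α := ℝ)]) (by positivity)
  calc ‖((-1 : ℝ) ^ k / (k + 1)) • x ^ (k + 1)‖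
      ≤ 1 * ‖x‖ ^ (k + 1) := by
        rw [norm_smul]
        exact mul_le_mul hcoeff (norm_pow_le' x k.succ_pos) (norm_nonneg _) zero_le_one
    _ ≤ ‖x‖ ^ k := by
        rw [one_mul, pow_succ]
        exact mul_le_of_le_one_right (by positivity) hx.le

theorem SemiconjBy.mlog {n : ℕ} {A X Y : Matrix (Fin n) (Fin n) ℝ} (h : SemiconjBy A X Y)
    (hX : ‖X - 1‖ < 1) (hY : ‖Y - 1‖ < 1) : SemiconjBy A (mlog X) (mlog Y) := by
  have hpow (k : ℕ) : SemiconjBy A ((X - 1) ^ (k + 1)) ((Y - 1) ^ (k + 1)) :=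
    (h.sub_right (SemiconjBy.one_right A)).pow_right _
  unfold SemiconjBy _root_.mlog
  rw [← (summable_log_series_of_norm_lt_one hX).tsum_mul_left,
    ← (summable_log_series_of_norm_lt_one hY).tsum_mul_right]
  simp only [mul_smul_comm, smul_mul_assoc, (hpow _).eq]

theorem HasDerivAt.matrix_inv {𝕜 m : Type*} [RCLike 𝕜] [Fintype m] [DecidableEq m]
    {f : 𝕜 → Matrix m m 𝕜} {f' : Matrix m m 𝕜} {t : 𝕜} (hf : HasDerivAt f f' t)
    (ht : IsUnit (f t)) :
    HasDerivAt (fun s => (f s)⁻¹) (-((f t)⁻¹ * f' * (f t)⁻¹)) t := by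
  obtain ⟨x, hx⟩ := ht
  have hinverse : HasFDerivAt Ring.inverse
      (-ContinuousLinearMap.mulLeftRight 𝕜 _ ↑x⁻¹ ↑x⁻¹) (f t) := hx ▸ hasFDerivAt_ringInverse x
  have h := hinverse.comp_hasDerivAt t hf
  simp only [Function.comp_def, neg_apply, ContinuousLinearMap.mulLeftRight_apply,
    ← Ring.inverse_unit, hx, ← Matrix.nonsing_inv_eq_ringInverse] at h
  exact h

/-- Passive observer: if at time `t` the plant satisfies `Ẋ = X u` and the observer satisfies
`Ẋ̂ = X̂ u − a₀ X̂ log(X⁻¹ X̂)`, with both invariant errors in the unit ball around `Iₙ`, then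
the right-invariant error `E_r = X̂ X⁻¹` satisfies `Ė_r = −a₀ E_r log E_r` at `t`. -/
theorem passive_observer_right_error {n : ℕ} (a₀ : ℝ)
    (u X Xhat X' Xhat' : ℝ → Matrix (Fin n) (Fin n) ℝ)
    (hXd : ∀ s : ℝ, HasDerivAt X (X' s) s)
    (hXhd : ∀ s : ℝ, HasDerivAt Xhat (Xhat' s) s)
    (hinv : ∀ s : ℝ, IsUnit (X s))
    (t : ℝ)
    (hplant : X' t = X t * u t)
    (hobs : Xhat' t = Xhat t * u t - a₀ • (Xhat t * mlog ((X t)⁻¹ * Xhat t)))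
    (hEl : ‖(X t)⁻¹ * Xhat t - 1‖ < 1)
    (hEr : ‖Xhat t * (X t)⁻¹ - 1‖ < 1) :
    HasDerivAt (fun s => Xhat s * (X s)⁻¹)
      (-(a₀ • ((Xhat t * (X t)⁻¹) * mlog (Xhat t * (X t)⁻¹)))) t := by
  set E := Xhat t * (X t)⁻¹
  have hinv_mul : (X t)⁻¹ * X t = 1 :=
    Matrix.nonsing_inv_mul _ ((Matrix.isUnit_iff_isUnit_det _).mp (hinv t))
  have hintertwine : Xhat t * mlog ((X t)⁻¹ * Xhat t) = mlog E * Xhat t :=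
    SemiconjBy.mlog (mul_assoc _ _ _).symm hEl hEr
  have hcomm : E * mlog E = mlog E * E := (Commute.refl E).mlog hEr hEr
  refine ((hXhd t).mul ((hXd t).matrix_inv (hinv t))).congr_deriv ?_
  rw [hobs, hplant, hcomm, sub_mul, smul_mul_assoc, hintertwine]
  simp only [E, mul_assoc, mul_neg]
  rw [← mul_assoc (X t)⁻¹ (X t), hinv_mul, one_mul]
  abel
end

section
/- Let a₀ ∈ ℝ, let u : ℝ → ℝ^{n×n}, and let X, X̂ : ℝ → ℝ^{n×n} be differentiable with X(t) invertible for all t. Suppose that at time t: Ẋ(t) = X(t) u(t); X̂ satisfies the direct observer equation Ẋ̂(t) = X(t) u(t) X(t)⁻¹ X̂(t) − a₀ X̂(t) log(X(t)⁻¹ X̂(t)); and ‖X(t)⁻¹ X̂(t) − Iₙ‖ < 1. Then the left-invariant error E_l(s) = X(s)⁻¹ X̂(s) is differentiable at t with Ė_l(t) = −a₀ E_l(t) log(E_l(t)). -/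
/-! The error `X⁻¹ X̂` has derivative `X⁻¹ (X̂' − X' X⁻¹ X̂)`. Along the plant `X' = X u` the
term `X' X⁻¹ X̂ = X u X⁻¹ X̂` is exactly the copy of the plant dynamics carried by the observer,
so only the correction `−a₀ X̂ log(X⁻¹ X̂)` survives, and `X⁻¹ X̂ log(X⁻¹ X̂)` is `E_l log E_l`. -/

open scoped Matrix.Norms.L2Operator

section RingInverse

variable {𝕜 R : Type*} [NontriviallyNormedField 𝕜] [NormedRing R] [HasSummableGeomSeries R]
  [NormedAlgebra 𝕜 R] {f g : 𝕜 → R} {f' g' : R} {t : 𝕜}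

theorem HasDerivAt.ringInverse (hf : HasDerivAt f f' t) (ht : IsUnit (f t)) :
    HasDerivAt (fun s => Ring.inverse (f s))
      (-(Ring.inverse (f t) * f' * Ring.inverse (f t))) t := by
  obtain ⟨x, hx⟩ := ht
  have hinv : HasFDerivAt Ring.inverse _ (f t) := hx ▸ hasFDerivAt_ringInverse (𝕜 := 𝕜) x
  have hx' : Ring.inverse (f t) = ↑x⁻¹ := by rw [← hx, Ring.inverse_unit]
  rw [hx']
  have h := (hinv.comp t hf.hasFDerivAt).hasDerivAt
  simp only [ContinuousLinearMap.neg_comp, neg_apply, ContinuousLinearMap.comp_apply,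
    ContinuousLinearMap.toSpanSingleton_apply, one_smul, ContinuousLinearMap.mulLeftRight_apply] at h
  exact h

theorem HasDerivAt.ringInverse_mul (hf : HasDerivAt f f' t) (hg : HasDerivAt g g' t)
    (ht : IsUnit (f t)) :
    HasDerivAt (fun s => Ring.inverse (f s) * g s)
      (Ring.inverse (f t) * (g' - f' * Ring.inverse (f t) * g t)) t := by
  refine ((hf.ringInverse ht).mul hg).congr_deriv ?_
  simp only [mul_sub, neg_mul, ← mul_assoc]
  abel

end RingInverse

theorem direct_observer_left_error_general {n : ℕ} (a₀ : ℝ)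
    (u X Xhat X' Xhat' : ℝ → Matrix (Fin n) (Fin n) ℝ)
    (hXd : ∀ s : ℝ, HasDerivAt X (X' s) s)
    (hXhd : ∀ s : ℝ, HasDerivAt Xhat (Xhat' s) s)
    (hinv : ∀ s : ℝ, IsUnit (X s))
    (t : ℝ)
    (hplant : X' t = X t * u t)
    (hobs : Xhat' t = X t * u t * (X t)⁻¹ * Xhat t - a₀ • (Xhat t * mlog ((X t)⁻¹ * Xhat t))) :
    HasDerivAt (fun s => (X s)⁻¹ * Xhat s)
      (-(a₀ • (((X t)⁻¹ * Xhat t) * mlog ((X t)⁻¹ * Xhat t)))) t := by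
  have hE := (hXd t).ringInverse_mul (hXhd t) (hinv t)
  simp only [← Matrix.nonsing_inv_eq_ringInverse] at hE
  refine hE.congr_deriv ?_
  rw [hobs, hplant, sub_sub_cancel_left, mul_neg, Matrix.mul_smul, mul_assoc]

/-- Direct observer: if at time `t` the plant satisfies `Ẋ = X u` and the observer satisfies
`Ẋ̂ = X u X⁻¹ X̂ − a₀ X̂ log(X⁻¹ X̂)`, with `‖X⁻¹ X̂ − Iₙ‖ < 1`, then the left-invariant
error `E_l = X⁻¹ X̂` satisfies `Ė_l = −a₀ E_l log E_l` at `t`. -/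
theorem direct_observer_left_error {n : ℕ} (a₀ : ℝ)
    (u X Xhat X' Xhat' : ℝ → Matrix (Fin n) (Fin n) ℝ)
    (hXd : ∀ s : ℝ, HasDerivAt X (X' s) s)
    (hXhd : ∀ s : ℝ, HasDerivAt Xhat (Xhat' s) s)
    (hinv : ∀ s : ℝ, IsUnit (X s))
    (t : ℝ)
    (hplant : X' t = X t * u t)
    (hobs : Xhat' t = X t * u t * (X t)⁻¹ * Xhat t - a₀ • (Xhat t * mlog ((X t)⁻¹ * Xhat t)))
    (hEl : ‖(X t)⁻¹ * Xhat t - 1‖ < 1) :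
    HasDerivAt (fun s => (X s)⁻¹ * Xhat s)
      (-(a₀ • (((X t)⁻¹ * Xhat t) * mlog ((X t)⁻¹ * Xhat t)))) t :=
  direct_observer_left_error_general a₀ u X Xhat X' Xhat' hXd hXhd hinv t hplant hobs
end
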